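/- arXiv:2506.21939 — 7 statements merged into one kernel-verified Lean document; each statement's English description precedes it below -/
import Mathlib

section
/- Let ρ = (ρ_0, ..., ρ_n) be a tuple of complex numbers such that Im(ρ̄_i ρ_{i−1}) > 0 for all 1 ≤ i ≤ n (ρ is a Bayer stability vector) and Im(ρ̄_n ρ_i) > 0 for all 0 ≤ i < n (ρ is adapted to torsion-free sheaves). Then Im(ρ̄_j ρ_i) > 0 for all 0 ≤ i < j ≤ n (ρ is adapted to coherent sheaves). -/
/-- Plücker-type identity for the symplectic form `ω(z,w) = Im(z̄ w)` on `ℂ`. -/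
lemma plucker_im (a b c d : ℂ) :
    ((starRingEnd ℂ) a * b).im * ((starRingEnd ℂ) c * d).im =
    ((starRingEnd ℂ) a * c).im * ((starRingEnd ℂ) b * d).im -
    ((starRingEnd ℂ) a * d).im * ((starRingEnd ℂ) b * c).im := by
  simp [Complex.mul_im]
  ring

/-- A stability vector which is Bayer (`Im(ρ̄ᵢ ρ_{i-1}) > 0` for `1 ≤ i ≤ n`) and
adapted to torsion-free sheaves (`Im(ρ̄ₙ ρᵢ) > 0` for `i < n`) is adapted to
coherent sheaves: `Im(ρ̄ⱼ ρᵢ) > 0` for all `i < j ≤ n`. -/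
theorem adapted_of_bayer_and_adapted_torsionFree (n : ℕ) (ρ : ℕ → ℂ)
    (hB : ∀ i, 1 ≤ i → i ≤ n → 0 < ((starRingEnd ℂ) (ρ i) * ρ (i - 1)).im)
    (hA : ∀ i, i < n → 0 < ((starRingEnd ℂ) (ρ n) * ρ i).im) :
    ∀ i j, i < j → j ≤ n → 0 < ((starRingEnd ℂ) (ρ j) * ρ i).im := by
  have key : ∀ j, j ≤ n → ∀ i, i < j → 0 < ((starRingEnd ℂ) (ρ j) * ρ i).im := by
    intro j
    induction j with
    | zero => intro _ i hi; omega
    | succ k ih =>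
      intro hk i hi
      rcases eq_or_lt_of_le hk with hkn | hkn
      · rw [hkn]
        exact hA i (by omega)
      · have h3 : 0 < ((starRingEnd ℂ) (ρ (k + 1)) * ρ k).im := by
          have := hB (k + 1) (by omega) (by omega)
          simpa using this
        rcases Nat.lt_succ_iff_lt_or_eq.mp hi with hik | hik
        · have h1 : 0 < ((starRingEnd ℂ) (ρ n) * ρ k).im := hA k (by omega)
          have h2 : 0 < ((starRingEnd ℂ) (ρ n) * ρ (k + 1)).im := hA (k + 1) hkn
          have h4 : 0 < ((starRingEnd ℂ) (ρ k) * ρ i).im := ih (by omega) i hik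
          have h5 : 0 < ((starRingEnd ℂ) (ρ n) * ρ i).im := hA i (by omega)
          have h6 : ((starRingEnd ℂ) (ρ k) * ρ (k + 1)).im =
              -((starRingEnd ℂ) (ρ (k + 1)) * ρ k).im := by
            simp [Complex.mul_im]
            ring
          have hp := plucker_im (ρ n) (ρ k) (ρ (k + 1)) (ρ i)
          nlinarith [mul_pos h2 h4, mul_pos h5 h3]
        · rw [hik]; exact h3
  intro i j hij hjn
  exact key j hjn i hij
end

section
/- With the notation of the coefficient identity a_p = Σ_{j=c}^{⌊p/2⌋} Im(ρ̄_{n−j} ρ_{n−p+j})(x_j y_{p−j} − x_{p−j} y_j): suppose x_i = y_i = 0 for i < c, x_c > 0, y_c > 0, and suppose c ≤ c′ ≤ n is such that x_j / x_c = y_j / y_c for all c ≤ j ≤ c′. Then a_p = 0 for all p ≤ c + c′. Moreover, if c′ < n, then a_{c+c′+1} = Im(ρ̄_{n−c} ρ_{n−c′−1}) · x_c · y_c · ( y_{c′+1}/y_c − x_{c′+1}/x_c ). -/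
/-!
Every summand of `aₚ` carries the cross term `xⱼ y_{p-j} - x_{p-j} yⱼ` with `j ≤ p - j`. It
vanishes when `j < c`, since then `xⱼ = yⱼ = 0`, and when `c ≤ j ≤ p - j ≤ c'`, since `x` and `y`
are proportional on `[c, c']`. For `p ≤ c + c'` this covers every `j`; for `p = c + c' + 1` only
`j = c` survives, and its cross term is `x_c y_{c'+1} - x_{c'+1} y_c`.
-/

theorem mul_sub_mul_eq_zero_of_div_eq_div {K : Type*} [Field K] {xa ya xb yb xc yc : K}
    (hxc : xc ≠ 0) (hyc : yc ≠ 0) (ha : xa / xc = ya / yc) (hb : xb / xc = yb / yc) :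
    xa * yb - xb * ya = 0 := by
  rw [div_eq_div_iff hxc hyc] at ha hb
  have hne : xc * yc ≠ 0 := mul_ne_zero hxc hyc
  apply mul_right_cancel₀ hne
  linear_combination (yb * xc) * ha - (ya * xc) * hb

theorem cross_term_eq_zero {x y : ℤ → ℝ} {c c' : ℕ}
    (hx0 : ∀ k : ℤ, k < (c : ℤ) → x k = 0) (hy0 : ∀ k : ℤ, k < (c : ℤ) → y k = 0)
    (hxc : x (c : ℤ) ≠ 0) (hyc : y (c : ℤ) ≠ 0)
    (hprop : ∀ j : ℤ, (c : ℤ) ≤ j → j ≤ (c' : ℤ) → x j / x (c : ℤ) = y j / y (c : ℤ))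
    (p j : ℕ) (hjp : 2 * j ≤ p) (h : j < c ∨ p ≤ j + c') :
    x (j : ℤ) * y ((p : ℤ) - j) - x ((p : ℤ) - j) * y (j : ℤ) = 0 := by
  rcases lt_or_ge j c with hjc | hcj
  · rw [hx0 j (by exact_mod_cast hjc), hy0 j (by exact_mod_cast hjc)]
    ring
  · have hpj : p ≤ j + c' := h.resolve_left hcj.not_gt
    exact mul_sub_mul_eq_zero_of_div_eq_div hxc hyc (hprop _ (by omega) (by omega))
      (hprop _ (by omega) (by omega))

open Finset in
theorem coeff_vanishing_and_leading_general (n c c' : ℕ) (ρ : ℤ → ℂ) (x y : ℤ → ℝ)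
    (hcc' : c ≤ c')
    (hx0 : ∀ k : ℤ, k < (c : ℤ) → x k = 0) (hy0 : ∀ k : ℤ, k < (c : ℤ) → y k = 0)
    (hxc : 0 < x (c : ℤ)) (hyc : 0 < y (c : ℤ))
    (hprop : ∀ j : ℤ, (c : ℤ) ≤ j → j ≤ (c' : ℤ) → x j / x (c : ℤ) = y j / y (c : ℤ)) :
    (∀ p : ℕ, p ≤ c + c' →
      (∑ j ∈ range (p / 2 + 1),
        ((starRingEnd ℂ) (ρ ((n : ℤ) - j)) * ρ ((n : ℤ) - p + j)).im *
          (x (j : ℤ) * y ((p : ℤ) - j) - x ((p : ℤ) - j) * y (j : ℤ))) = 0) ∧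
    (c' < n →
      (∑ j ∈ range ((c + c' + 1) / 2 + 1),
        ((starRingEnd ℂ) (ρ ((n : ℤ) - j)) * ρ ((n : ℤ) - (c + c' + 1 : ℕ) + j)).im *
          (x (j : ℤ) * y ((c + c' + 1 : ℕ) - (j : ℤ)) -
            x ((c + c' + 1 : ℕ) - (j : ℤ)) * y (j : ℤ))) =
      ((starRingEnd ℂ) (ρ ((n : ℤ) - c)) * ρ ((n : ℤ) - c' - 1)).im * x (c : ℤ) * y (c : ℤ) *
        (y ((c' : ℤ) + 1) / y (c : ℤ) - x ((c' : ℤ) + 1) / x (c : ℤ))) := by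
  have hcross := cross_term_eq_zero hx0 hy0 hxc.ne' hyc.ne' hprop
  refine ⟨fun p hp => sum_eq_zero fun j hj => ?_, fun _ => ?_⟩
  · rw [mem_range] at hj
    rw [hcross _ _ (by omega) (by omega), mul_zero]
  · rw [sum_eq_single_of_mem c (mem_range.mpr (by omega)) fun j hj hjc => by
      rw [mem_range] at hj
      rw [hcross _ _ (by omega) (by omega), mul_zero]]
    have hindex : (n : ℤ) - (c + c' + 1 : ℕ) + c = (n : ℤ) - c' - 1 := by push_cast; ring
    have hshift : ((c + c' + 1 : ℕ) : ℤ) - c = (c' : ℤ) + 1 := by push_cast; ring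
    rw [hindex, hshift]
    field_simp [hxc.ne', hyc.ne']

open Finset in
/-- Vanishing and first nonzero coefficient: with
`aₚ = Σ_{j=0}^{⌊p/2⌋} Im(ρ̄_{n-j} ρ_{n-p+j})(xⱼ y_{p-j} - x_{p-j} yⱼ)`, if
`xᵢ = yᵢ = 0` for `i < c`, `x_c > 0`, `y_c > 0`, and `xⱼ/x_c = yⱼ/y_c` for
`c ≤ j ≤ c'`, then `aₚ = 0` for `p ≤ c + c'`, and if `c' < n` then
`a_{c+c'+1} = Im(ρ̄_{n-c} ρ_{n-c'-1}) x_c y_c (y_{c'+1}/y_c - x_{c'+1}/x_c)`. -/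
theorem coeff_vanishing_and_leading (n c c' : ℕ) (ρ : ℤ → ℂ) (x y : ℤ → ℝ)
    (hcc' : c ≤ c') (hc'n : c' ≤ n)
    (hρ : ∀ k : ℤ, k < 0 ∨ (n : ℤ) < k → ρ k = 0)
    (hx0 : ∀ k : ℤ, k < (c : ℤ) → x k = 0) (hy0 : ∀ k : ℤ, k < (c : ℤ) → y k = 0)
    (hxc : 0 < x (c : ℤ)) (hyc : 0 < y (c : ℤ))
    (hprop : ∀ j : ℤ, (c : ℤ) ≤ j → j ≤ (c' : ℤ) → x j / x (c : ℤ) = y j / y (c : ℤ)) :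
    (∀ p : ℕ, p ≤ c + c' →
      (∑ j ∈ range (p / 2 + 1),
        ((starRingEnd ℂ) (ρ ((n : ℤ) - j)) * ρ ((n : ℤ) - p + j)).im *
          (x (j : ℤ) * y ((p : ℤ) - j) - x ((p : ℤ) - j) * y (j : ℤ))) = 0) ∧
    (c' < n →
      (∑ j ∈ range ((c + c' + 1) / 2 + 1),
        ((starRingEnd ℂ) (ρ ((n : ℤ) - j)) * ρ ((n : ℤ) - (c + c' + 1 : ℕ) + j)).im *
          (x (j : ℤ) * y ((c + c' + 1 : ℕ) - (j : ℤ)) -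
            x ((c + c' + 1 : ℕ) - (j : ℤ)) * y (j : ℤ))) =
      ((starRingEnd ℂ) (ρ ((n : ℤ) - c)) * ρ ((n : ℤ) - c' - 1)).im * x (c : ℤ) * y (c : ℤ) *
        (y ((c' : ℤ) + 1) / y (c : ℤ) - x ((c' : ℤ) + 1) / x (c : ℤ))) :=
  coeff_vanishing_and_leading_general n c c' ρ x y hcc' hx0 hy0 hxc hyc hprop
end

section
/- Let n ≥ 0 and let ρ = (ρ_0, ..., ρ_n) ∈ ℂ^{n+1} satisfy Im(ρ̄_{n−c} ρ_i) > 0 for all i < n−c, for some fixed 0 ≤ c ≤ n. Let (x_i), (y_i) be real sequences indexed by 0 ≤ i ≤ n with x_i = y_i = 0 for i < c and x_c > 0, y_c > 0. Set X(ε) = Σ_i ρ_{n−i} x_i ε^i and Y(ε) = Σ_j ρ_{n−j} y_j ε^j. Then Im( conj(X(ε)) Y(ε) ) > 0 for all sufficiently small ε > 0 if and only if the vector (y_c/y_c, y_{c+1}/y_c, ..., y_n/y_c) is lexicographically strictly greater than (x_c/x_c, x_{c+1}/x_c, ..., x_n/x_c). Similarly, Im( conj(X(ε)) Y(ε) ) ≥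 0 for all sufficiently small ε > 0 if and only if lexicographic ≥ holds, and Im( conj(X(ε)) Y(ε) ) < 0 for all sufficiently small ε > 0 if and only if lexicographic < holds. -/
open Finset Complex Filter Topology

private lemma shift_sum {n m : ℕ} (hm : m ≤ n + 1) (f : ℕ → ℂ) (hf : ∀ i < m, f i = 0) :
    ∑ i ∈ range (n + 1), f i = ∑ i ∈ range (n + 1 - m), f (m + i) := by
  have h1 : ∑ i ∈ Finset.Ico 0 m, f i = 0 :=
    Finset.sum_eq_zero fun i hi => hf i (Finset.mem_Ico.mp hi).2
  calc ∑ i ∈ range (n + 1), f i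
      = ∑ i ∈ Finset.Ico 0 m, f i + ∑ i ∈ Finset.Ico m (n + 1), f i := by
        rw [range_eq_Ico, Finset.sum_Ico_consecutive f (Nat.zero_le m) hm]
    _ = ∑ i ∈ Finset.Ico m (n + 1), f i := by rw [h1, zero_add]
    _ = ∑ i ∈ range (n + 1 - m), f (m + i) := by
        rw [Finset.sum_Ico_eq_sum_range]

private lemma factor_eps {n m : ℕ} (hm : m ≤ n) (ρ : ℕ → ℂ) (w : ℕ → ℝ)
    (hw : ∀ i, i < m → w i = 0) (ε : ℝ) :
    ∑ i ∈ range (n + 1), ρ (n - i) * (w i : ℂ) * (ε : ℂ) ^ i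
      = (ε : ℂ) ^ m * ∑ i ∈ range (n + 1 - m), ρ (n - (m + i)) * (w (m + i) : ℂ) * (ε : ℂ) ^ i := by
  rw [shift_sum (n := n) (m := m) (by omega) _ (fun i hi => by rw [hw i hi]; simp), Finset.mul_sum]
  exact Finset.sum_congr rfl fun i _ => by rw [pow_add]; ring

private lemma core_pos (n c k : ℕ) (hck : c < k) (hkn : k ≤ n) (ρ : ℕ → ℂ) (x z : ℕ → ℝ)
    (hx0 : ∀ i, i < c → x i = 0) (hz0 : ∀ j, j < k → z j = 0)
    (hA : 0 < x c * z k * ((starRingEnd ℂ) (ρ (n - c)) * ρ (n - k)).im) :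
    ∃ ε₀ > (0 : ℝ), ∀ ε : ℝ, 0 < ε → ε < ε₀ →
      0 < ((starRingEnd ℂ) (∑ i ∈ range (n + 1), ρ (n - i) * (x i : ℂ) * (ε : ℂ) ^ i) *
        ∑ j ∈ range (n + 1), ρ (n - j) * (z j : ℂ) * (ε : ℂ) ^ j).im := by
  set Xg : ℝ → ℂ := fun ε => ∑ i ∈ range (n + 1 - c), ρ (n - (c + i)) * (x (c + i) : ℂ) * (ε : ℂ) ^ i with hXg
  set Zg : ℝ → ℂ := fun ε => ∑ i ∈ range (n + 1 - k), ρ (n - (k + i)) * (z (k + i) : ℂ) * (ε : ℂ) ^ i with hZg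
  set H : ℝ → ℝ := fun ε => ((starRingEnd ℂ) (Xg ε) * Zg ε).im with hH
  have hF : ∀ ε : ℝ,
      ((starRingEnd ℂ) (∑ i ∈ range (n + 1), ρ (n - i) * (x i : ℂ) * (ε : ℂ) ^ i) *
        ∑ j ∈ range (n + 1), ρ (n - j) * (z j : ℂ) * (ε : ℂ) ^ j).im
      = ε ^ (c + k) * H ε := by
    intro ε
    rw [factor_eps (le_of_lt (lt_of_lt_of_le hck hkn)) ρ x hx0 ε,
      factor_eps hkn ρ z hz0 ε, map_mul]
    have h1 : (starRingEnd ℂ) ((ε : ℂ) ^ c) = (ε : ℂ) ^ c := by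
      rw [← Complex.ofReal_pow, Complex.conj_ofReal, Complex.ofReal_pow]
    rw [h1]
    have h2 : (ε : ℂ) ^ c * (starRingEnd ℂ) (Xg ε) * ((ε : ℂ) ^ k * Zg ε)
        = ((ε ^ (c + k) : ℝ) : ℂ) * ((starRingEnd ℂ) (Xg ε) * Zg ε) := by
      push_cast; ring
    rw [h2, Complex.im_ofReal_mul]
  have hXg0 : Xg 0 = ρ (n - c) * (x c : ℂ) := by
    simp only [hXg]
    rw [Finset.sum_eq_single 0]
    · simp
    · intro i _ hi; simp [zero_pow hi]
    · intro h; exact absurd (Finset.mem_range.mpr (by omega)) h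
  have hZg0 : Zg 0 = ρ (n - k) * (z k : ℂ) := by
    simp only [hZg]
    rw [Finset.sum_eq_single 0]
    · simp
    · intro i _ hi; simp [zero_pow hi]
    · intro h; exact absurd (Finset.mem_range.mpr (by omega)) h
  have hH0 : H 0 = x c * z k * ((starRingEnd ℂ) (ρ (n - c)) * ρ (n - k)).im := by
    simp only [hH, hXg0, hZg0, map_mul, Complex.conj_ofReal]
    have h3 : (starRingEnd ℂ) (ρ (n - c)) * (x c : ℂ) * (ρ (n - k) * (z k : ℂ))
        = ((x c * z k : ℝ) : ℂ) * ((starRingEnd ℂ) (ρ (n - c)) * ρ (n - k)) := by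
      push_cast; ring
    rw [h3, Complex.im_ofReal_mul]
  have hXgc : Continuous Xg := by
    apply continuous_finset_sum
    intro i _
    exact continuous_const.mul (Complex.continuous_ofReal.pow i)
  have hZgc : Continuous Zg := by
    apply continuous_finset_sum
    intro i _
    exact continuous_const.mul (Complex.continuous_ofReal.pow i)
  have hHc : Continuous H :=
    Complex.continuous_im.comp ((continuous_star.comp hXgc).mul hZgc)
  have hev : ∀ᶠ ε in 𝓝 (0 : ℝ), 0 < H ε := by
    have h0 : 0 < H 0 := by rw [hH0]; exact hA
    exact (hHc.tendsto 0).eventually (eventually_gt_nhds h0)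
  rw [Metric.eventually_nhds_iff] at hev
  obtain ⟨δ, hδ, hball⟩ := hev
  refine ⟨δ, hδ, fun ε hε hεδ => ?_⟩
  rw [hF ε]
  have : 0 < H ε := hball (by rw [Real.dist_eq, sub_zero, abs_of_pos hε]; exact hεδ)
  exact mul_pos (pow_pos hε _) this

private lemma core_neg (n c k : ℕ) (hck : c < k) (hkn : k ≤ n) (ρ : ℕ → ℂ) (x z : ℕ → ℝ)
    (hx0 : ∀ i, i < c → x i = 0) (hz0 : ∀ j, j < k → z j = 0)
    (hA : x c * z k * ((starRingEnd ℂ) (ρ (n - c)) * ρ (n - k)).im < 0) :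
    ∃ ε₀ > (0 : ℝ), ∀ ε : ℝ, 0 < ε → ε < ε₀ →
      ((starRingEnd ℂ) (∑ i ∈ range (n + 1), ρ (n - i) * (x i : ℂ) * (ε : ℂ) ^ i) *
        ∑ j ∈ range (n + 1), ρ (n - j) * (z j : ℂ) * (ε : ℂ) ^ j).im < 0 := by
  have hA' : 0 < x c * (-z) k * ((starRingEnd ℂ) (ρ (n - c)) * ρ (n - k)).im := by
    have : x c * (-z) k * ((starRingEnd ℂ) (ρ (n - c)) * ρ (n - k)).im
        = -(x c * z k * ((starRingEnd ℂ) (ρ (n - c)) * ρ (n - k)).im) := by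
      simp only [Pi.neg_apply]; ring
    rw [this]; linarith
  obtain ⟨ε₀, hε₀, h⟩ := core_pos n c k hck hkn ρ x (-z) hx0
    (fun j hj => by simp only [Pi.neg_apply, hz0 j hj, neg_zero]) hA'
  refine ⟨ε₀, hε₀, fun ε h1 h2 => ?_⟩
  have h3 := h ε h1 h2
  have h4 : (∑ j ∈ range (n + 1), ρ (n - j) * (((-z) j : ℝ) : ℂ) * (ε : ℂ) ^ j)
      = -(∑ j ∈ range (n + 1), ρ (n - j) * ((z j : ℝ) : ℂ) * (ε : ℂ) ^ j) := by
    rw [← Finset.sum_neg_distrib]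
    exact Finset.sum_congr rfl fun j _ => by simp only [Pi.neg_apply]; push_cast; ring
  rw [h4, mul_neg, Complex.neg_im] at h3
  linarith

open Finset in
/-- Characterisation of asymptotic destabilisation for equal codimension `c`:
when `ρ` is adapted to dimension `n - c` (`Im(ρ̄_{n-c} ρᵢ) > 0` for `i < n - c`),
`Im(conj(X(ε)) Y(ε))` is eventually positive (resp. nonnegative, negative) for
small `ε > 0` iff the slope vector `(yⱼ/y_c)` is lexicographically greater than
(resp. at least, less than) `(xⱼ/x_c)`. -/
theorem eventual_sign_iff_lex (n c : ℕ) (hcn : c ≤ n) (ρ : ℕ → ℂ) (x y : ℕ → ℝ)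
    (hρ : ∀ i, i < n - c → 0 < ((starRingEnd ℂ) (ρ (n - c)) * ρ i).im)
    (hx0 : ∀ i, i < c → x i = 0) (hy0 : ∀ i, i < c → y i = 0)
    (hxc : 0 < x c) (hyc : 0 < y c) :
    let F : ℝ → ℝ := fun ε =>
      ((starRingEnd ℂ) (∑ i ∈ range (n + 1), ρ (n - i) * (x i : ℝ) * ε ^ i) *
        ∑ j ∈ range (n + 1), ρ (n - j) * (y j : ℝ) * ε ^ j).im
    let lexGT : Prop := ∃ k, c ≤ k ∧ k ≤ n ∧
      (∀ j, c ≤ j → j < k → y j / y c = x j / x c) ∧ x k / x c < y k / y c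
    let lexLT : Prop := ∃ k, c ≤ k ∧ k ≤ n ∧
      (∀ j, c ≤ j → j < k → y j / y c = x j / x c) ∧ y k / y c < x k / x c
    let lexEQ : Prop := ∀ j, c ≤ j → j ≤ n → y j / y c = x j / x c
    ((∃ ε₀ > (0 : ℝ), ∀ ε : ℝ, 0 < ε → ε < ε₀ → 0 < F ε) ↔ lexGT) ∧
    ((∃ ε₀ > (0 : ℝ), ∀ ε : ℝ, 0 < ε → ε < ε₀ → 0 ≤ F ε) ↔ (lexGT ∨ lexEQ)) ∧
    ((∃ ε₀ > (0 : ℝ), ∀ ε : ℝ, 0 < ε → ε < ε₀ → F ε < 0) ↔ lexLT) := by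
  intro F lexGT lexLT lexEQ
  classical
  set lam : ℝ := y c / x c with hlam
  set z : ℕ → ℝ := fun j => y j - lam * x j with hzdef
  have hxc' : x c ≠ 0 := ne_of_gt hxc
  have hyc' : y c ≠ 0 := ne_of_gt hyc
  -- slope equalities/inequalities vs z
  have hz_iff : ∀ j, z j = 0 ↔ y j / y c = x j / x c := by
    intro j
    simp only [hzdef, hlam, sub_eq_zero]
    rw [div_mul_eq_mul_div, eq_div_iff hxc', div_eq_div_iff hyc' hxc']
    constructor <;> intro h <;> linarith
  have hz_pos : ∀ j, 0 < z j ↔ x j / x c < y j / y c := by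
    intro j
    simp only [hzdef, hlam, sub_pos]
    rw [div_mul_eq_mul_div, div_lt_iff₀ hxc, div_lt_div_iff₀ hxc hyc]
    constructor <;> intro h <;> linarith
  have hz_neg : ∀ j, z j < 0 ↔ y j / y c < x j / x c := by
    intro j
    simp only [hzdef, hlam, sub_neg]
    rw [div_mul_eq_mul_div, lt_div_iff₀ hxc, div_lt_div_iff₀ hyc hxc]
    constructor <;> intro h <;> linarith
  -- rewrite F through z
  have hFz : ∀ ε : ℝ, F ε =
      ((starRingEnd ℂ) (∑ i ∈ range (n + 1), ρ (n - i) * (x i : ℂ) * (ε : ℂ) ^ i) *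
        ∑ j ∈ range (n + 1), ρ (n - j) * (z j : ℂ) * (ε : ℂ) ^ j).im := by
    intro ε
    have hY : (∑ j ∈ range (n + 1), ρ (n - j) * (y j : ℂ) * (ε : ℂ) ^ j)
        = (lam : ℂ) * (∑ j ∈ range (n + 1), ρ (n - j) * (x j : ℂ) * (ε : ℂ) ^ j)
          + ∑ j ∈ range (n + 1), ρ (n - j) * (z j : ℂ) * (ε : ℂ) ^ j := by
      rw [Finset.mul_sum, ← Finset.sum_add_distrib]
      refine Finset.sum_congr rfl fun j _ => ?_
      have hy : y j = lam * x j + z j := by simp [hzdef]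
      rw [hy]; push_cast; ring
    show ((starRingEnd ℂ) (∑ i ∈ range (n + 1), ρ (n - i) * (x i : ℂ) * (ε : ℂ) ^ i) *
        ∑ j ∈ range (n + 1), ρ (n - j) * (y j : ℂ) * (ε : ℂ) ^ j).im = _
    rw [hY, mul_add, Complex.add_im]
    set X := ∑ i ∈ range (n + 1), ρ (n - i) * (x i : ℂ) * (ε : ℂ) ^ i with hX
    have h1 : ((starRingEnd ℂ) X * ((lam : ℂ) * X)).im = 0 := by
      have h2 : (starRingEnd ℂ) X * ((lam : ℂ) * X) = (lam : ℂ) * ((starRingEnd ℂ) X * X) := by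
        ring
      rw [h2, Complex.im_ofReal_mul]
      have h3 : ((starRingEnd ℂ) X * X).im = 0 := by
        simp [Complex.mul_im]; ring
      rw [h3, mul_zero]
    rw [h1, zero_add]
  -- lexEQ ⇒ F ≡ 0
  have hEQzero : lexEQ → ∀ ε : ℝ, F ε = 0 := by
    intro hEQ ε
    rw [hFz ε]
    have hZ : (∑ j ∈ range (n + 1), ρ (n - j) * (z j : ℂ) * (ε : ℂ) ^ j) = 0 := by
      refine Finset.sum_eq_zero fun j hj => ?_
      have hzj : z j = 0 := by
        rcases lt_or_ge j c with h | h
        · simp [hzdef, hx0 j h, hy0 j h]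
        · exact (hz_iff j).mpr (hEQ j h (Nat.lt_succ_iff.mp (Finset.mem_range.mp hj)))
      rw [hzj]; simp
    rw [hZ, mul_zero, Complex.zero_im]
  -- lexGT ⇒ eventually positive
  have hGTpos : lexGT → ∃ ε₀ > (0 : ℝ), ∀ ε : ℝ, 0 < ε → ε < ε₀ → 0 < F ε := by
    rintro ⟨k, hck, hkn, hprev, hlt⟩
    have hck' : c < k := by
      rcases lt_or_eq_of_le hck with h | h
      · exact h
      · exfalso; rw [← h, div_self hxc', div_self hyc'] at hlt; exact lt_irrefl 1 hlt
    have hz0' : ∀ j, j < k → z j = 0 := by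
      intro j hj
      rcases lt_or_ge j c with h | h
      · simp [hzdef, hx0 j h, hy0 j h]
      · exact (hz_iff j).mpr (hprev j h hj)
    have hzk : 0 < z k := (hz_pos k).mpr hlt
    have hA : 0 < x c * z k * ((starRingEnd ℂ) (ρ (n - c)) * ρ (n - k)).im :=
      mul_pos (mul_pos hxc hzk) (hρ (n - k) (by omega))
    obtain ⟨ε₀, hε₀, h⟩ := core_pos n c k hck' hkn ρ x z hx0 hz0' hA
    exact ⟨ε₀, hε₀, fun ε h1 h2 => by rw [hFz ε]; exact h ε h1 h2⟩
  -- lexLT ⇒ eventually negative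
  have hLTneg : lexLT → ∃ ε₀ > (0 : ℝ), ∀ ε : ℝ, 0 < ε → ε < ε₀ → F ε < 0 := by
    rintro ⟨k, hck, hkn, hprev, hlt⟩
    have hck' : c < k := by
      rcases lt_or_eq_of_le hck with h | h
      · exact h
      · exfalso; rw [← h, div_self hxc', div_self hyc'] at hlt; exact lt_irrefl 1 hlt
    have hz0' : ∀ j, j < k → z j = 0 := by
      intro j hj
      rcases lt_or_ge j c with h | h
      · simp [hzdef, hx0 j h, hy0 j h]
      · exact (hz_iff j).mpr (hprev j h hj)
    have hzk : z k < 0 := (hz_neg k).mpr hlt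
    have hA : x c * z k * ((starRingEnd ℂ) (ρ (n - c)) * ρ (n - k)).im < 0 :=
      mul_neg_of_neg_of_pos (mul_neg_of_pos_of_neg hxc hzk) (hρ (n - k) (by omega))
    obtain ⟨ε₀, hε₀, h⟩ := core_neg n c k hck' hkn ρ x z hx0 hz0' hA
    exact ⟨ε₀, hε₀, fun ε h1 h2 => by rw [hFz ε]; exact h ε h1 h2⟩
  -- trichotomy
  have htri : lexGT ∨ lexEQ ∨ lexLT := by
    by_cases hE : ∀ j, c ≤ j → j ≤ n → y j / y c = x j / x c
    · exact Or.inr (Or.inl hE)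
    · push_neg at hE
      obtain ⟨j, hcj, hjn, hne⟩ := hE
      have hex : ∃ k, c ≤ k ∧ k ≤ n ∧ y k / y c ≠ x k / x c := ⟨j, hcj, hjn, hne⟩
      obtain ⟨hck, hkn, hkne⟩ := Nat.find_spec hex
      have hmin : ∀ j, c ≤ j → j < Nat.find hex → y j / y c = x j / x c := by
        intro j hcj hjk
        have h := Nat.find_min hex hjk
        push_neg at h
        exact h hcj (le_trans (le_of_lt hjk) hkn)
      rcases lt_or_gt_of_ne hkne with h | h
      · exact Or.inr (Or.inr ⟨Nat.find hex, hck, hkn, hmin, h⟩)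
      · exact Or.inl ⟨Nat.find hex, hck, hkn, hmin, h⟩
  -- common small ε for two eventual statements
  have hcommon : ∀ (P Q : ℝ → Prop),
      (∃ a > (0 : ℝ), ∀ ε : ℝ, 0 < ε → ε < a → P ε) →
      (∃ b > (0 : ℝ), ∀ ε : ℝ, 0 < ε → ε < b → Q ε) →
      ∃ ε : ℝ, 0 < ε ∧ P ε ∧ Q ε := by
    rintro P Q ⟨a, ha, hP⟩ ⟨b, hb, hQ⟩
    refine ⟨min a b / 2, by positivity, ?_, ?_⟩
    · exact hP _ (by positivity)
        (lt_of_lt_of_le (half_lt_self (by positivity)) (min_le_left a b))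
    · exact hQ _ (by positivity)
        (lt_of_lt_of_le (half_lt_self (by positivity)) (min_le_right a b))
  refine ⟨⟨?_, hGTpos⟩, ⟨?_, ?_⟩, ⟨?_, hLTneg⟩⟩
  · -- eventually > 0 ⇒ lexGT
    intro h
    rcases htri with hGT | hEQ | hLT
    · exact hGT
    · exfalso
      obtain ⟨a, ha, hP⟩ := h
      have := hP (a / 2) (by positivity) (half_lt_self ha)
      rw [hEQzero hEQ (a / 2)] at this
      exact lt_irrefl 0 this
    · exfalso
      obtain ⟨ε, -, h1, h2⟩ := hcommon _ _ h (hLTneg hLT)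
      linarith
  · -- eventually ≥ 0 ⇒ lexGT ∨ lexEQ
    intro h
    rcases htri with hGT | hEQ | hLT
    · exact Or.inl hGT
    · exact Or.inr hEQ
    · exfalso
      obtain ⟨ε, -, h1, h2⟩ := hcommon _ _ h (hLTneg hLT)
      linarith
  · -- lexGT ∨ lexEQ ⇒ eventually ≥ 0
    rintro (hGT | hEQ)
    · obtain ⟨ε₀, hε₀, h⟩ := hGTpos hGT
      exact ⟨ε₀, hε₀, fun ε h1 h2 => le_of_lt (h ε h1 h2)⟩
    · exact ⟨1, one_pos, fun ε _ _ => le_of_eq (hEQzero hEQ ε).symm⟩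
  · -- eventually < 0 ⇒ lexLT
    intro h
    rcases htri with hGT | hEQ | hLT
    · exfalso
      obtain ⟨ε, -, h1, h2⟩ := hcommon _ _ h (hGTpos hGT)
      linarith
    · exfalso
      obtain ⟨a, ha, hP⟩ := h
      have := hP (a / 2) (by positivity) (half_lt_self ha)
      rw [hEQzero hEQ (a / 2)] at this
      exact lt_irrefl 0 this
    · exact hLT
end

section
/- Let n ≥ 0, ρ = (ρ_0, ..., ρ_n) ∈ ℂ^{n+1}, and let 0 ≤ c < c_F ≤ n with Im( ρ̄_{n−c} ρ_{n−c_F} ) > 0. Let (x_i), (y_i) be real sequences with x_i = 0 for i < c, x_c > 0, and y_i = 0 for i < c_F, y_{c_F} > 0. Then Im( conj(Σ_i ρ_{n−i} x_i ε^i) · (Σ_j ρ_{n−j} y_j ε^j) ) > 0 for all sufficiently small ε > 0. -/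
open Finset in
/-- A "subsheaf" of strictly larger codimension `c_F > c` always strictly
destabilises: if `Im(ρ̄_{n-c} ρ_{n-c_F}) > 0`, `xᵢ = 0` for `i < c`, `x_c > 0`,
`yᵢ = 0` for `i < c_F`, `y_{c_F} > 0`, then `Im(conj(X(ε)) Y(ε)) > 0` for all
sufficiently small `ε > 0`. -/
theorem eventually_pos_of_smaller_dimension (n c cF : ℕ) (hc : c < cF) (hcF : cF ≤ n)
    (ρ : ℕ → ℂ) (x y : ℕ → ℝ)
    (hρ : 0 < ((starRingEnd ℂ) (ρ (n - c)) * ρ (n - cF)).im)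
    (hx0 : ∀ i, i < c → x i = 0) (hxc : 0 < x c)
    (hy0 : ∀ i, i < cF → y i = 0) (hycF : 0 < y cF) :
    ∃ ε₀ > (0 : ℝ), ∀ ε : ℝ, 0 < ε → ε < ε₀ →
      0 < ((starRingEnd ℂ) (∑ i ∈ range (n + 1), ρ (n - i) * (x i : ℝ) * ε ^ i) *
        ∑ j ∈ range (n + 1), ρ (n - j) * (y j : ℝ) * ε ^ j).im := by
  set g : ℝ → ℝ := fun ε => ∑ i ∈ range (n+1), ∑ j ∈ range (n+1),
      ((starRingEnd ℂ) (ρ (n-i)) * ρ (n-j)).im * x i * y j * ε ^ ((i - c) + (j - cF)) with hg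
  have hgc : Continuous g := by
    apply continuous_finset_sum; intro i _
    apply continuous_finset_sum; intro j _
    exact continuous_const.mul (continuous_pow _)
  have hg0 : 0 < g 0 := by
    have hcn : c ∈ range (n+1) := mem_range.2 (by omega)
    have hcFn : cF ∈ range (n+1) := mem_range.2 (by omega)
    have hval : g 0 = ((starRingEnd ℂ) (ρ (n-c)) * ρ (n-cF)).im * x c * y cF := by
      rw [hg]
      simp only []
      rw [Finset.sum_eq_single_of_mem c hcn]
      · rw [Finset.sum_eq_single_of_mem cF hcFn]
        · simp
        · intro j _ hj
          rcases lt_or_gt_of_ne hj with h | h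
          · rw [hy0 j h]; ring
          · have hne : (c - c) + (j - cF) ≠ 0 := by omega
            rw [zero_pow hne]; ring
      · intro i _ hi
        rcases lt_or_gt_of_ne hi with h | h
        · rw [Finset.sum_eq_zero]; intro j _; rw [hx0 i h]; ring
        · rw [Finset.sum_eq_zero]; intro j _
          have hne : (i - c) + (j - cF) ≠ 0 := by omega
          rw [zero_pow hne]; ring
    rw [hval]
    exact mul_pos (mul_pos hρ hxc) hycF
  have hopen : IsOpen {ε : ℝ | 0 < g ε} := isOpen_lt continuous_const hgc
  obtain ⟨ε₀, hε₀, hsub⟩ := Metric.isOpen_iff.mp hopen 0 hg0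
  refine ⟨ε₀, hε₀, fun ε hε1 hε2 => ?_⟩
  have hgε : 0 < g ε := hsub (by
    rw [Metric.mem_ball, Real.dist_eq, sub_zero, abs_of_pos hε1]; exact hε2)
  have key : ((starRingEnd ℂ) (∑ i ∈ range (n + 1), ρ (n - i) * (x i : ℝ) * ε ^ i) *
        ∑ j ∈ range (n + 1), ρ (n - j) * (y j : ℝ) * ε ^ j).im = ε^(c+cF) * g ε := by
    rw [map_sum, Finset.sum_mul_sum, Complex.im_sum, hg]
    simp only []
    rw [Finset.mul_sum]
    refine Finset.sum_congr rfl fun i hi => ?_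
    rw [Complex.im_sum, Finset.mul_sum]
    refine Finset.sum_congr rfl fun j hj => ?_
    rcases lt_or_ge i c with h | h
    · simp [hx0 i h]
    rcases lt_or_ge j cF with h' | h'
    · simp [hy0 j h']
    have hterm : (starRingEnd ℂ) (ρ (n - i) * (x i : ℝ) * (ε:ℂ) ^ i) *
        (ρ (n - j) * (y j : ℝ) * (ε:ℂ) ^ j)
        = ((x i * y j * ε ^ (i+j) : ℝ) : ℂ) * ((starRingEnd ℂ) (ρ (n-i)) * ρ (n-j)) := by
      push_cast
      rw [map_mul, map_mul, Complex.conj_ofReal, ← Complex.ofReal_pow, Complex.conj_ofReal]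
      push_cast
      ring
    rw [hterm, Complex.mul_im]
    simp only [Complex.ofReal_re, Complex.ofReal_im, zero_mul, add_zero]
    have hexp : i + j = (c + cF) + ((i - c) + (j - cF)) := by omega
    rw [hexp, pow_add]
    ring
  rw [key]
  exact mul_pos (pow_pos hε1 _) hgε
end

section
/- Fix n ≥ 3 and define ρ_i = −(−i)^i / i! for 0 ≤ i ≤ n (the stability vector of the deformed Hermitian Yang–Mills central charge). Then (a) Im(ρ̄_i ρ_{i−1}) = 1/(i!(i−1)!) > 0 for all 1 ≤ i ≤ n, so ρ is a Bayer stability vector; but (b) Im(ρ̄_n ρ_{n−3}) = −1/(n!(n−3)!) < 0, so ρ is not adapted to torsion-free sheaves. -/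
open Complex

private lemma dHYM_aux1 (k : ℕ) : (I:ℂ)^(k+1) * (-I)^k = I := by
  have h : (I:ℂ) * -I = 1 := by simp [Complex.I_mul_I]
  calc (I:ℂ)^(k+1) * (-I)^k = ((I:ℂ) * -I)^k * I := by ring
    _ = I := by rw [h]; simp

private lemma dHYM_aux2 (k : ℕ) : (I:ℂ)^(k+3) * (-I)^k = -I := by
  have h : (I:ℂ) * -I = 1 := by simp [Complex.I_mul_I]
  calc (I:ℂ)^(k+3) * (-I)^k = ((I:ℂ) * -I)^k * I^3 := by ring
    _ = -I := by rw [h]; simp [pow_succ, Complex.I_mul_I]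

private lemma dHYM_conj (i : ℕ) :
    (starRingEnd ℂ) (-(-I) ^ i / (i.factorial : ℂ)) = -(I:ℂ)^i / (i.factorial : ℂ) := by
  simp [map_div₀, map_neg, map_pow, Complex.conj_I]

private lemma dHYM_im_pos (a b : ℕ) (x : ℂ) (hx : x = I / ((a.factorial : ℂ) * (b.factorial : ℂ))) :
    x.im = 1 / ((a.factorial : ℝ) * (b.factorial : ℝ)) := by
  subst hx
  have : ((a.factorial : ℂ) * (b.factorial : ℂ)) = (((a.factorial : ℝ) * (b.factorial : ℝ) : ℝ) : ℂ) := by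
    push_cast; ring
  rw [this, Complex.div_ofReal_im]
  simp

/-- The dHYM stability vector `ρᵢ = -(-i)^i / i!` is Bayer
(`Im(ρ̄ᵢ ρ_{i-1}) = 1/(i!(i-1)!) > 0`) but not adapted to torsion-free sheaves
(`Im(ρ̄ₙ ρ_{n-3}) = -1/(n!(n-3)!) < 0`), for `n ≥ 3`. -/
theorem dHYM_bayer_not_adapted (n : ℕ) (hn : 3 ≤ n) (ρ : ℕ → ℂ)
    (hρ : ∀ i, ρ i = -(-Complex.I) ^ i / (i.factorial : ℂ)) :
    (∀ i, 1 ≤ i → i ≤ n →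
      ((starRingEnd ℂ) (ρ i) * ρ (i - 1)).im =
          1 / ((i.factorial : ℝ) * ((i - 1).factorial : ℝ)) ∧
        0 < ((starRingEnd ℂ) (ρ i) * ρ (i - 1)).im) ∧
    (((starRingEnd ℂ) (ρ n) * ρ (n - 3)).im =
        -(1 / ((n.factorial : ℝ) * ((n - 3).factorial : ℝ))) ∧
      ((starRingEnd ℂ) (ρ n) * ρ (n - 3)).im < 0) := by
  have hprod : ∀ i j : ℕ, (starRingEnd ℂ) (ρ i) * ρ j =
      ((I:ℂ)^i * (-I)^j) / ((i.factorial : ℂ) * (j.factorial : ℂ)) := by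
    intro i j
    rw [hρ i, hρ j, dHYM_conj]
    have hi : (i.factorial : ℂ) ≠ 0 := Nat.cast_ne_zero.2 i.factorial_ne_zero
    have hj : (j.factorial : ℂ) ≠ 0 := Nat.cast_ne_zero.2 j.factorial_ne_zero
    field_simp
  have hfpos : ∀ a b : ℕ, 0 < 1 / ((a.factorial : ℝ) * (b.factorial : ℝ)) := by
    intro a b
    positivity
  constructor
  · intro i h1 h2
    obtain ⟨k, rfl⟩ : ∃ k, i = k + 1 := ⟨i - 1, (Nat.succ_pred_eq_of_pos h1).symm⟩
    have heq : (starRingEnd ℂ) (ρ (k+1)) * ρ (k + 1 - 1) =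
        I / (((k+1).factorial : ℂ) * ((k+1-1).factorial : ℂ)) := by
      rw [hprod]
      simp only [Nat.add_sub_cancel]
      rw [dHYM_aux1]
    have him := dHYM_im_pos (k+1) (k+1-1) _ heq
    refine ⟨him, ?_⟩
    rw [him]; exact hfpos _ _
  · obtain ⟨m, rfl⟩ : ∃ m, n = m + 3 := ⟨n - 3, (Nat.sub_add_cancel hn).symm⟩
    have heq : (starRingEnd ℂ) (ρ (m+3)) * ρ (m + 3 - 3) =
        -(I / (((m+3).factorial : ℂ) * ((m+3-3).factorial : ℂ))) := by
      rw [hprod]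
      simp only [Nat.add_sub_cancel]
      rw [dHYM_aux2]
      ring
    have him : ((starRingEnd ℂ) (ρ (m+3)) * ρ (m + 3 - 3)).im =
        -(1 / (((m+3).factorial : ℝ) * ((m+3-3).factorial : ℝ))) := by
      rw [heq, Complex.neg_im, dHYM_im_pos (m+3) (m+3-3) _ rfl]
    exact ⟨him, by rw [him]; exact neg_neg_iff_pos.2 (hfpos _ _)⟩
end

section
/- Let ρ = (ρ_0, ..., ρ_n) be a Bayer stability vector (Im(ρ̄_i ρ_{i−1}) > 0 for all 1 ≤ i ≤ n) such that Im(ρ̄_n ρ_0) ≠ 0 and there exists λ ∈ ℂ* with λρ_i ∈ H̄ for all i, where H̄ = { r e^{iπθ} : r ≥ 0, 0 ≤ θ ≤ 1 } is the closed upper half-plane. Then ρ is adapted to coherent sheaves: Im(ρ̄_j ρ_i) > 0 for all 0 ≤ i < j ≤ n. -/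
private lemma step_lemma' {a1 a2 b1 b2 c1 c2 : ℝ} (ha : 0 ≤ a2) (hb : 0 ≤ b2) (hc : 0 ≤ c2)
    (h1 : 0 < b1 * a2 - b2 * a1) (h2 : 0 < c1 * b2 - c2 * b1) :
    0 < c1 * a2 - c2 * a1 ∨ (a2 = 0 ∧ a1 < 0 ∧ c2 = 0 ∧ 0 < c1) := by
  rcases eq_or_lt_of_le hb with hb0 | hb0
  · exfalso
    subst hb0
    nlinarith [mul_pos h1 h2, mul_nonneg (mul_nonneg ha hc) (sq_nonneg b1)]
  · rcases eq_or_lt_of_le ha with ha0 | ha0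
    · rcases eq_or_lt_of_le hc with hc0 | hc0
      · right
        subst ha0
        subst hc0
        refine ⟨rfl, ?_, rfl, ?_⟩ <;> nlinarith
      · left; nlinarith [mul_pos hc0 h1]
    · left; nlinarith [mul_pos ha0 h2, mul_nonneg hc h1.le]

private lemma chain_lemma' (n : ℕ) (x y : ℕ → ℝ) (hy : ∀ i ≤ n, 0 ≤ y i)
    (hB : ∀ i, 1 ≤ i → i ≤ n → 0 < x i * y (i-1) - y i * x (i-1)) :
    ∀ i j, i < j → j ≤ n → 0 < x j * y i - y j * x i ∨
      (y i = 0 ∧ x i < 0 ∧ y j = 0 ∧ 0 < x j) := by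
  intro i j hij hjn
  induction j with
  | zero => omega
  | succ j ih =>
    rcases Nat.lt_or_ge i j with h | h
    · have IH := ih h (by omega)
      have hb := hB (j+1) (by omega) hjn
      simp only [Nat.add_sub_cancel] at hb
      rcases IH with IH | ⟨hyi, hxi, hyj, hxj⟩
      · exact step_lemma' (hy i (by omega)) (hy j (by omega)) (hy (j+1) hjn) IH hb
      · exfalso
        have hnn := hy (j+1) hjn
        rw [hyj] at hb
        nlinarith [mul_nonneg hnn hxj.le]
    · have hi : i = j := by omega
      subst hi
      have hb := hB (i+1) (by omega) hjn
      simp only [Nat.add_sub_cancel] at hb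
      left; exact hb

/-- If `ρ` is a Bayer stability vector with `Im(ρ̄ₙ ρ₀) ≠ 0` and there is a
nonzero `λ` with all `λ ρᵢ` in the closed upper half-plane, then `ρ` is adapted
to coherent sheaves: `Im(ρ̄ⱼ ρᵢ) > 0` for all `0 ≤ i < j ≤ n`. -/
theorem adapted_of_bayer_and_common_closed_halfPlane (n : ℕ) (ρ : ℕ → ℂ)
    (hB : ∀ i, 1 ≤ i → i ≤ n → 0 < ((starRingEnd ℂ) (ρ i) * ρ (i - 1)).im)
    (h0 : ((starRingEnd ℂ) (ρ n) * ρ 0).im ≠ 0)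
    (hl : ∃ l : ℂ, l ≠ 0 ∧ ∀ i ≤ n, 0 ≤ (l * ρ i).im) :
    ∀ i j, i < j → j ≤ n → 0 < ((starRingEnd ℂ) (ρ j) * ρ i).im := by
  obtain ⟨l, hl0, hup⟩ := hl
  have hq : 0 < Complex.normSq l := Complex.normSq_pos.mpr hl0
  set x : ℕ → ℝ := fun i => (l * ρ i).re with hx
  set y : ℕ → ℝ := fun i => (l * ρ i).im with hyd
  have scale : ∀ i j, x j * y i - y j * x i
      = Complex.normSq l * ((starRingEnd ℂ) (ρ j) * ρ i).im := by
    intro i j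
    simp only [hx, hyd, Complex.mul_re, Complex.mul_im, Complex.normSq_apply,
      Complex.conj_re, Complex.conj_im]
    ring
  have hy : ∀ i ≤ n, 0 ≤ y i := fun i hi => hup i hi
  have hBx : ∀ i, 1 ≤ i → i ≤ n → 0 < x i * y (i-1) - y i * x (i-1) := by
    intro i h1 h2
    rw [scale]
    exact mul_pos hq (hB i h1 h2)
  intro i j hij hjn
  rcases chain_lemma' n x y hy hBx i j hij hjn with h | ⟨hyi, hxi, hyj, hxj⟩
  · rw [scale] at h
    nlinarith [h, hq]
  · exfalso
    have hi0 : i = 0 := by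
      by_contra hne
      have hb := hBx i (by omega) (by omega)
      have hnn := hy (i-1) (by omega)
      rw [hyi] at hb
      nlinarith [mul_nonneg hnn (neg_nonneg.2 hxi.le)]
    have hjn' : j = n := by
      by_contra hne
      have hb := hBx (j+1) (by omega) (by omega)
      simp only [Nat.add_sub_cancel] at hb
      have hnn := hy (j+1) (by omega)
      rw [hyj] at hb
      nlinarith [mul_nonneg hnn hxj.le]
    apply h0
    rw [hi0] at hyi
    rw [hjn'] at hyj
    have h2 : Complex.normSq l * ((starRingEnd ℂ) (ρ n) * ρ 0).im = 0 := by
      rw [← scale 0 n, hyi, hyj]; ring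
    rcases mul_eq_zero.mp h2 with h3 | h3
    · exact absurd h3 (ne_of_gt hq)
    · exact h3
end

section
/- Let n ≥ 0 and ρ = (ρ_0, ..., ρ_n) ∈ ℂ^{n+1} with Im(ρ̄_j ρ_i) > 0 for all 0 ≤ i < j ≤ n. Then for every pair of real sequences (x_i), (y_i) indexed by 0 ≤ i ≤ n such that there exist c_x ≤ c_y with x_i = 0 for i < c_x, x_{c_x} > 0, y_i = 0 for i < c_y, y_{c_y} > 0, the polynomial ε ↦ Im( conj(Σ_i ρ_{n−i} x_i ε^i) · Σ_j ρ_{n−j} y_j ε^j ) is either identically zero, eventually positive on (0, ε₀), or eventually negative on (0, ε₀) for some ε₀ > 0; moreover it is identically zero if and only if c_x = c_y and y_i x_{c_x} = x_i y_{c_x} for all i. -/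
/-! Writing out `F` gives the real polynomial `∑ x_i y_j Im(ρ̄_{n-i} ρ_{n-j}) ε^{i+j}`, which,
unless it vanishes, has near `0⁺` the sign of its lowest nonzero coefficient. Since `Im(X̄ X) = 0`,
replacing `y` by `w = x_{c_x} y - y_{c_x} x` only rescales `F` by `x_{c_x} > 0`, and `w_{c_x} = 0`.
If `w ≠ 0`, its first nonzero entry `w_k` (`k ≠ c_x`) contributes the lone term
`x_{c_x} w_k Im(ρ̄_{n-c_x} ρ_{n-k}) ε^{c_x+k} ≠ 0`. Hence `F ≡ 0` iff `y` is proportional to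
`x`, which forces `c_x = c_y`. -/

open Finset Polynomial Filter Topology ComplexConjugate

theorem exists_forall_Ioo_of_eventually_nhdsGT {p : ℝ → Prop} {a : ℝ}
    (h : ∀ᶠ ε in 𝓝[>] a, p ε) : ∃ ε₀ > a, ∀ ε, a < ε → ε < ε₀ → p ε := by
  obtain ⟨ε₀, hε₀, hsub⟩ := mem_nhdsGT_iff_exists_Ioo_subset.mp h
  exact ⟨ε₀, hε₀, fun ε h₁ h₂ => hsub ⟨h₁, h₂⟩⟩

namespace Polynomial

theorem eventually_pos_nhdsGT_of_trailingCoeff_pos {p : ℝ[X]} (hp : 0 < p.trailingCoeff) :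
    ∀ᶠ ε in 𝓝[>] 0, 0 < p.eval ε := by
  obtain ⟨q, hpq⟩ : X ^ p.natTrailingDegree ∣ p :=
    X_pow_dvd_iff.mpr fun d hd => coeff_eq_zero_of_lt_natTrailingDegree hd
  have hq0 : 0 < q.eval 0 := by
    have : p.trailingCoeff = q.coeff 0 := by
      rw [trailingCoeff, ← coeff_X_pow_mul q p.natTrailingDegree 0, zero_add, ← hpq]
    rwa [← coeff_zero_eq_eval_zero, ← this]
  have hq : ∀ᶠ ε in 𝓝[>] 0, 0 < q.eval ε :=
    nhdsWithin_le_nhds (continuousAt_const.eventually_lt q.continuous.continuousAt hq0)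
  filter_upwards [hq, self_mem_nhdsWithin] with ε hqε hε
  rw [hpq, eval_mul, eval_pow, eval_X]
  exact mul_pos (pow_pos hε _) hqε

theorem eventually_pos_or_eventually_neg_nhdsGT {p : ℝ[X]} (hp : p ≠ 0) :
    (∀ᶠ ε in 𝓝[>] 0, 0 < p.eval ε) ∨ (∀ᶠ ε in 𝓝[>] 0, p.eval ε < 0) := by
  rcases (trailingCoeff_nonzero_iff_nonzero.mpr hp).lt_or_gt with hneg | hpos
  · right
    have : 0 < (-p).trailingCoeff := by
      simpa [trailingCoeff, natTrailingDegree_neg] using hneg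
    filter_upwards [eventually_pos_nhdsGT_of_trailingCoeff_pos this] with ε hε
    simpa using hε
  · exact .inl (eventually_pos_nhdsGT_of_trailingCoeff_pos hpos)

end Polynomial

theorem Complex.im_conj_mul_swap (a b : ℂ) : (conj b * a).im = -(conj a * b).im := by
  rw [← Complex.conj_im, map_mul, Complex.conj_conj, mul_comm]

theorem Complex.im_conj_mul_ofReal_mul_sub (a b : ℂ) (s t : ℝ) :
    (conj a * (s * b - t * a)).im = s * (conj a * b).im := by
  have hself : (conj a * a).im = 0 := by
    rw [← Complex.normSq_eq_conj_mul_self, Complex.ofReal_im]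
  simp only [mul_sub, Complex.sub_im, mul_left_comm (conj a), Complex.im_ofReal_mul, hself,
    mul_zero, sub_zero]

section StabilityVector

variable (n : ℕ) (ρ : ℕ → ℂ)

/-- The central charge of the degree vector `u` twisted by `ε`. -/
noncomputable def centralCharge (u : ℕ → ℝ) (ε : ℝ) : ℂ :=
  ∑ i ∈ range (n + 1), ρ (n - i) * (u i : ℝ) * ε ^ i

theorem centralCharge_smul_sub_smul (u v : ℕ → ℝ) (s t ε : ℝ) :
    centralCharge n ρ (s • v - t • u) ε =
      s * centralCharge n ρ v ε - t * centralCharge n ρ u ε := by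
  simp only [centralCharge, mul_sum, ← sum_sub_distrib, Pi.sub_apply, Pi.smul_apply, smul_eq_mul]
  refine sum_congr rfl fun i _ => ?_
  push_cast
  ring

noncomputable def imPoly (u v : ℕ → ℝ) : ℝ[X] :=
  ∑ i ∈ range (n + 1), ∑ j ∈ range (n + 1),
    C (u i * v j * (conj (ρ (n - i)) * ρ (n - j)).im) * X ^ (i + j)

theorem eval_imPoly (u v : ℕ → ℝ) (ε : ℝ) :
    (imPoly n ρ u v).eval ε = (conj (centralCharge n ρ u ε) * centralCharge n ρ v ε).im := by
  simp only [imPoly, centralCharge, map_sum, sum_mul_sum, eval_finsetSum, Complex.im_sum]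
  refine sum_congr rfl fun i _ => sum_congr rfl fun j _ => ?_
  have : conj (ρ (n - i) * (u i : ℝ) * (ε : ℂ) ^ i) *
      (ρ (n - j) * (v j : ℝ) * (ε : ℂ) ^ j) =
        ((u i * v j * ε ^ (i + j) : ℝ) : ℂ) * (conj (ρ (n - i)) * ρ (n - j)) := by
    simp only [map_mul, map_pow, Complex.conj_ofReal]
    push_cast
    ring
  rw [this, Complex.im_ofReal_mul, eval_mul, eval_C, eval_pow, eval_X]
  ring

theorem imPoly_smul_sub_smul (u v : ℕ → ℝ) (s t : ℝ) :
    imPoly n ρ u (s • v - t • u) = C s * imPoly n ρ u v :=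
  Polynomial.funext fun ε => by
    rw [eval_imPoly, centralCharge_smul_sub_smul, eval_mul, eval_C, eval_imPoly,
      Complex.im_conj_mul_ofReal_mul_sub]

theorem coeff_imPoly_add {u v : ℕ → ℝ} {c k : ℕ} (hc : c ≤ n) (hk : k ≤ n)
    (hu : ∀ i < c, u i = 0) (hv : ∀ j < k, v j = 0) :
    (imPoly n ρ u v).coeff (c + k) = u c * v k * (conj (ρ (n - c)) * ρ (n - k)).im := by
  have hterm : ∀ i j,
      (C (u i * v j * (conj (ρ (n - i)) * ρ (n - j)).im) * X ^ (i + j)).coeff (c + k) =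
        if i = c ∧ j = k then u c * v k * (conj (ρ (n - c)) * ρ (n - k)).im else 0 := by
    intro i j
    rw [coeff_C_mul_X_pow]
    by_cases hik : i = c ∧ j = k
    · simp [hik]
    rw [if_neg hik]
    split_ifs with hij
    · rcases lt_or_gt_of_ne (fun h : i = c => hik ⟨h, by omega⟩) with hi | hi
      · simp [hu i hi]
      · simp [hv j (by omega)]
    · rfl
  simp only [imPoly, finsetSum_coeff, hterm, ite_and]
  simp [hc, hk]

theorem imPoly_eq_zero_iff (hρ : ∀ i ≤ n, ∀ j ≤ n, i ≠ j → (conj (ρ i) * ρ j).im ≠ 0)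
    {u v : ℕ → ℝ} {c : ℕ} (hc : c ≤ n) (hu0 : ∀ i < c, u i = 0) (huc : u c ≠ 0)
    (hvc : v c = 0) : imPoly n ρ u v = 0 ↔ ∀ k ≤ n, v k = 0 := by
  classical
  constructor
  · intro h
    by_contra! hv
    let k := Nat.find hv
    obtain ⟨hk, hvk⟩ : k ≤ n ∧ v k ≠ 0 := Nat.find_spec hv
    have hbelow : ∀ j < k, v j = 0 := fun j hj => by
      by_contra hvj
      exact Nat.find_min hv hj ⟨by omega, hvj⟩
    have hkc : k ≠ c := fun h => hvk (h ▸ hvc)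
    have hcoeff := coeff_imPoly_add n ρ hc hk hu0 hbelow
    rw [h, coeff_zero] at hcoeff
    exact mul_ne_zero (mul_ne_zero huc hvk) (hρ _ (by omega) _ (by omega) (by omega)) hcoeff.symm
  · intro hv
    refine sum_eq_zero fun i _ => sum_eq_zero fun j hj => ?_
    rw [hv j (Nat.lt_succ_iff.mp (mem_range.mp hj))]
    simp

end StabilityVector

theorem im_conj_mul_ne_zero_of_ne {n : ℕ} {ρ : ℕ → ℂ}
    (hρ : ∀ i j, i < j → j ≤ n → 0 < (conj (ρ j) * ρ i).im) {i j : ℕ} (hi : i ≤ n)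
    (hj : j ≤ n) (hij : i ≠ j) : (conj (ρ i) * ρ j).im ≠ 0 := by
  rcases lt_or_gt_of_ne hij with h | h
  · rw [Complex.im_conj_mul_swap]
    exact neg_ne_zero.mpr (hρ i j h hj).ne'
  · exact (hρ j i h hi).ne'

theorem eq_of_forall_mul_eq_mul {x y : ℕ → ℝ} {n cx cy : ℕ} (hc : cx ≤ cy) (hcy : cy ≤ n)
    (hy0 : ∀ i < cy, y i = 0) (hxc : x cx ≠ 0) (hyc : y cy ≠ 0)
    (h : ∀ i ≤ n, y i * x cx = x i * y cx) : cx = cy := by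
  by_contra hne
  have := h cy hcy
  rw [hy0 cx (lt_of_le_of_ne hc hne), mul_zero] at this
  exact mul_ne_zero hyc hxc this

open Finset in
/-- Trichotomy for adapted stability vectors: if `Im(ρ̄ⱼ ρᵢ) > 0` for all
`i < j ≤ n` and `x, y` have leading positive entries at `c_x ≤ c_y ≤ n`, then
`F(ε) = Im(conj(X(ε)) Y(ε))` is identically zero, eventually positive, or
eventually negative on some `(0, ε₀)`; and it is identically zero iff
`c_x = c_y` and the degree vectors are proportional. -/
theorem trichotomy_adapted (n : ℕ) (ρ : ℕ → ℂ)
    (hρ : ∀ i j, i < j → j ≤ n → 0 < ((starRingEnd ℂ) (ρ j) * ρ i).im)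
    (x y : ℕ → ℝ) (cx cy : ℕ) (hc : cx ≤ cy) (hcy : cy ≤ n)
    (hx0 : ∀ i, i < cx → x i = 0) (hxc : 0 < x cx)
    (hy0 : ∀ i, i < cy → y i = 0) (hyc : 0 < y cy) :
    let F : ℝ → ℝ := fun ε =>
      ((starRingEnd ℂ) (∑ i ∈ range (n + 1), ρ (n - i) * (x i : ℝ) * ε ^ i) *
        ∑ j ∈ range (n + 1), ρ (n - j) * (y j : ℝ) * ε ^ j).im
    ((∀ ε : ℝ, F ε = 0) ∨
      (∃ ε₀ > (0 : ℝ), ∀ ε : ℝ, 0 < ε → ε < ε₀ → 0 < F ε) ∨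
      (∃ ε₀ > (0 : ℝ), ∀ ε : ℝ, 0 < ε → ε < ε₀ → F ε < 0)) ∧
    ((∀ ε : ℝ, F ε = 0) ↔ (cx = cy ∧ ∀ i ≤ n, y i * x cx = x i * y cx)) := by
  intro F
  have hF : ∀ ε, F ε = (imPoly n ρ x y).eval ε := fun ε => (eval_imPoly n ρ x y ε).symm
  have hF_zero : (∀ ε, F ε = 0) ↔ imPoly n ρ x y = 0 := by
    simp only [hF]
    exact ⟨zero_of_eval_zero _, fun h ε => by rw [h, eval_zero]⟩
  have hprop : imPoly n ρ x y = 0 ↔ ∀ i ≤ n, y i * x cx = x i * y cx := by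
    rw [← mul_eq_zero_iff_left (C_ne_zero.mpr hxc.ne'),
      ← imPoly_smul_sub_smul n ρ x y (x cx) (y cx),
      imPoly_eq_zero_iff n ρ (fun i hi j hj => im_conj_mul_ne_zero_of_ne hρ hi hj)
        (hc.trans hcy) hx0 hxc.ne' (by simp [mul_comm])]
    refine forall₂_congr fun i _ => ?_
    rw [Pi.sub_apply, Pi.smul_apply, Pi.smul_apply, smul_eq_mul, smul_eq_mul, sub_eq_zero,
      mul_comm (x cx), mul_comm (y cx)]
  refine ⟨?_, hF_zero.trans (hprop.trans
    ⟨fun h => ⟨eq_of_forall_mul_eq_mul hc hcy hy0 hxc.ne' hyc.ne' h, h⟩, And.right⟩)⟩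
  rcases eq_or_ne (imPoly n ρ x y) 0 with h | h
  · exact .inl (hF_zero.mpr h)
  · simp only [hF]
    exact .inr ((eventually_pos_or_eventually_neg_nhdsGT h).imp
      exists_forall_Ioo_of_eventually_nhdsGT exists_forall_Ioo_of_eventually_nhdsGT)
end
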